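/- arXiv:2509.18989 — 5 statements merged into one kernel-verified Lean document; each statement's English description precedes it below -/
import Mathlib

section
/- For every permutation σ ∈ S_n and every i ∈ {1,…,n}, the R-matrix Dunkl operators satisfy the equivariance property ŝ_σ ∘ y_i(λ) = y_{σ(i)}(σ·λ) ∘ ŝ_σ, where y_i(λ) denotes the Dunkl operator with spectral parameter λ and (σ·λ)_j = λ_{σ^{-1}(j)}. No properties (i)–(iii) of R are required for this identity. -/
open Finset

noncomputable section

/-- Matrices modelling `End(ℂ^d ⊗ ℂ^d)`. -/
abbrev M2 (d : ℕ) := Matrix (Fin d × Fin d) (Fin d × Fin d) ℂ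

/-- The spin space `U = (ℂ^d)^{⊗ n}`, modelled as functions `(Fin n → Fin d) → ℂ`. -/
abbrev Uspin (n d : ℕ) := (Fin n → Fin d) → ℂ

/-- Tensor-leg placement `T_{ij}` of `T ∈ End(ℂ^d ⊗ ℂ^d)` acting in the `i`-th and
`j`-th tensor factors of `U = (ℂ^d)^{⊗ n}`. -/
def leg {n d : ℕ} (T : M2 d) (i j : Fin n) :
    Matrix (Fin n → Fin d) (Fin n → Fin d) ℂ :=
  fun a b => T (a i, a j) (b i, b j) *
    ∏ k ∈ univ.filter (fun k => k ≠ i ∧ k ≠ j), (if a k = b k then (1 : ℂ) else 0)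

/-- The operator `P_σ` on `U` permuting the tensor factors:
`P_σ (u_1 ⊗ … ⊗ u_n) = u_{σ⁻¹(1)} ⊗ … ⊗ u_{σ⁻¹(n)}`; on the function model
it is `(P_σ v)(a) = v(a ∘ σ)`. -/
def permU {n d : ℕ} (σ : Equiv.Perm (Fin n)) : Uspin n d → Uspin n d :=
  fun v a => v (a ∘ σ)

/-- The operator `ŝ_σ`: `(ŝ_σ f)(x) = P_σ f(σ⁻¹·x)`, where `(σ·x)_j = x_{σ⁻¹(j)}`
(so `σ⁻¹·x = x ∘ σ`). -/
def shatP {n d : ℕ} (σ : Equiv.Perm (Fin n)) (f : (Fin n → ℂ) → Uspin n d) :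
    (Fin n → ℂ) → Uspin n d :=
  fun x => permU σ (f (x ∘ σ))

/-- The `R`-matrix Dunkl operator with spectral parameter `λ`:
`y_i(λ) = ℏ ∂/∂x_i − g Σ_{j ≠ i} R_{ij}(x_i−x_j, λ_i−λ_j) ∘ ŝ_{ij}`,
where `ŝ_{ij} = ŝ_{s_{ij}}` for the transposition `s_{ij}`. -/
def dunkl {n d : ℕ} (R : ℂ → ℂ → M2 d) (hbar g : ℂ) (lam : Fin n → ℂ) (i : Fin n)
    (f : (Fin n → ℂ) → Uspin n d) : (Fin n → ℂ) → Uspin n d :=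
  fun x => hbar • fderiv ℂ f x (Pi.single i 1) -
    g • ∑ j ∈ univ.filter (fun j => j ≠ i),
      (leg (R (x i - x j) (lam i - lam j)) i j).mulVec
        (shatP (Equiv.swap i j) f x)

/-!
Relabelling the tensor slots by `σ` acts on the coordinates by the linear automorphism
`x ↦ x ∘ σ` and on the spin space by the linear automorphism `permU σ`, so `ŝ_σ` is conjugation
by continuous linear equivalences. The derivative commutes with such conjugations for every `f`
(both sides vanish together where `f` is not differentiable), turning `∂_i` into `∂_{σ i}`.
In the interaction term, the relabelling conjugates `T_{ij}` into `T_{σ i, σ j}` and `ŝ_{ij}`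
into `ŝ_{σ i, σ j}`, so reindexing the sum by `j ↦ σ j` gives the `σ i`-th term with spectral
parameter `σ·λ`.
-/

namespace Dunkl

variable {n d : ℕ}

def compPerm {ι α : Type*} (σ : Equiv.Perm ι) : (ι → α) ≃ (ι → α) where
  toFun a := a ∘ σ
  invFun a := a ∘ σ.symm
  left_inv a := by simp [Function.comp_assoc]
  right_inv a := by simp [Function.comp_assoc]

def permUCLE (σ : Equiv.Perm (Fin n)) : Uspin n d ≃L[ℂ] Uspin n d :=
  (LinearEquiv.funCongrLeft ℂ ℂ (compPerm σ)).toContinuousLinearEquiv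

def compPermCLE (σ : Equiv.Perm (Fin n)) : (Fin n → ℂ) ≃L[ℂ] (Fin n → ℂ) :=
  (LinearEquiv.funCongrLeft ℂ ℂ σ).toContinuousLinearEquiv

lemma shatP_shatP (τ σ : Equiv.Perm (Fin n)) (f : (Fin n → ℂ) → Uspin n d) :
    shatP τ (shatP σ f) = shatP (τ * σ) f := rfl

lemma shatP_swap_shatP (σ : Equiv.Perm (Fin n)) (i j : Fin n) (f : (Fin n → ℂ) → Uspin n d) :
    shatP (Equiv.swap (σ i) (σ j)) (shatP σ f) = shatP σ (shatP (Equiv.swap i j) f) := by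
  rw [shatP_shatP, shatP_shatP, Equiv.swap_apply_apply, inv_mul_cancel_right]

lemma leg_submatrix_compPerm (T : M2 d) (σ : Equiv.Perm (Fin n)) (i j : Fin n) :
    (leg T i j).submatrix (compPerm σ) (compPerm σ) = leg T (σ i) (σ j) := by
  ext a b
  simp only [leg, Matrix.submatrix_apply, compPerm, Equiv.coe_fn_mk, Function.comp_apply]
  congr 1
  exact Finset.prod_equiv σ (by simp) fun _ _ => rfl

lemma permU_leg_mulVec (T : M2 d) (σ : Equiv.Perm (Fin n)) (i j : Fin n) (w : Uspin n d) :
    permU σ ((leg T i j).mulVec w) = (leg T (σ i) (σ j)).mulVec (permU σ w) := by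
  rw [← leg_submatrix_compPerm, Matrix.submatrix_mulVec_equiv]
  have hw : permU σ w ∘ (compPerm σ).symm = w :=
    funext fun b => congrArg w ((compPerm σ).apply_symm_apply b)
  rw [hw]
  rfl

lemma fderiv_shatP (σ : Equiv.Perm (Fin n)) (f : (Fin n → ℂ) → Uspin n d) (x v : Fin n → ℂ) :
    fderiv ℂ (shatP σ f) x v = permU σ (fderiv ℂ f (x ∘ σ) (v ∘ σ)) := by
  have hconj : shatP σ f = permUCLE σ ∘ f ∘ compPermCLE σ := rfl
  rw [hconj, ContinuousLinearEquiv.comp_fderiv, ContinuousLinearEquiv.comp_right_fderiv]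
  rfl

end Dunkl

open Dunkl in
theorem dunkl_equivariance_general
    (n d : ℕ) (R : ℂ → ℂ → M2 d) (hbar g : ℂ) (lam : Fin n → ℂ) (Ω : Set (Fin n → ℂ))
    (σ : Equiv.Perm (Fin n)) (i : Fin n) (f : (Fin n → ℂ) → Uspin n d) :
    ∀ x ∈ Ω,
      shatP σ (dunkl R hbar g lam i f) x =
      dunkl R hbar g (lam ∘ ⇑σ⁻¹) (σ i) (shatP σ f) x := by
  intro x _
  have hderiv : permU σ (fderiv ℂ f (x ∘ σ) (Pi.single i 1)) =
      fderiv ℂ (shatP σ f) x (Pi.single (σ i) 1) := by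
    rw [fderiv_shatP, Pi.single_comp_equiv, Equiv.symm_apply_apply]
  have hterm : ∀ j, permU σ ((leg (R (x (σ i) - x (σ j)) (lam i - lam j)) i j).mulVec
        (shatP (Equiv.swap i j) f (x ∘ σ))) =
      (leg (R (x (σ i) - x (σ j)) ((lam ∘ ⇑σ⁻¹) (σ i) - (lam ∘ ⇑σ⁻¹) (σ j))) (σ i) (σ j)).mulVec
        (shatP (Equiv.swap (σ i) (σ j)) (shatP σ f) x) := by
    intro j
    rw [permU_leg_mulVec, shatP_swap_shatP]
    simp only [Function.comp_apply, Equiv.Perm.inv_def, Equiv.symm_apply_apply]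
    rfl
  show permUCLE σ (dunkl R hbar g lam i f (x ∘ σ)) = _
  rw [dunkl, map_sub, map_smul, map_smul, map_sum]
  exact congrArg₂ (· - ·) (congrArg (hbar • ·) hderiv)
    (congrArg (g • ·) (Finset.sum_equiv σ (by simp) fun j _ => hterm j))

/-- equivariance of the `R`-matrix Dunkl operators:
`ŝ_σ ∘ y_i(λ) = y_{σ(i)}(σ·λ) ∘ ŝ_σ`, where `(σ·λ)_j = λ_{σ⁻¹(j)}`.
No properties (i)–(iii) of `R` are required. -/
theorem dunkl_equivariance
    (n d : ℕ) (hn : 2 ≤ n) (hd : 1 ≤ d)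
    (D : Set ℂ) (hDopen : IsOpen D) (hDsym : ∀ z ∈ D, -z ∈ D)
    (R : ℂ → ℂ → M2 d)
    (hRhol : ∀ a b, DifferentiableOn ℂ (fun p : ℂ × ℂ => R p.1 p.2 a b) (D ×ˢ D))
    (hbar g : ℂ) (lam : Fin n → ℂ) (hlam : ∀ i j : Fin n, i ≠ j → lam i - lam j ∈ D)
    (Ω : Set (Fin n → ℂ)) (hΩopen : IsOpen Ω) (hΩne : Ω.Nonempty)
    (hΩperm : ∀ σ : Equiv.Perm (Fin n), ∀ x ∈ Ω, (x ∘ σ) ∈ Ω)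
    (hΩD : ∀ x ∈ Ω, ∀ i j : Fin n, i ≠ j → x i - x j ∈ D)
    (σ : Equiv.Perm (Fin n)) (i : Fin n)
    (f : (Fin n → ℂ) → Uspin n d) (hf : DifferentiableOn ℂ f Ω) :
    ∀ x ∈ Ω,
      shatP σ (dunkl R hbar g lam i f) x =
      dunkl R hbar g (lam ∘ ⇑σ⁻¹) (σ i) (shatP σ f) x :=
  dunkl_equivariance_general n d R hbar g lam Ω σ i f

end
end

section
/- Assume R satisfies skew-symmetry (i) and the associative Yang–Baxter equation (ii). Define, for each i ∈ {1,…,n}, the operator θ_i := Σ_{j≠i} R_{ij}(x_i−x_j, λ_i−λ_j) ∘ ŝ_{ij} on holomorphic U-valued functions on Ω. Then θ_i ∘ θ_k = θ_k ∘ θ_i for all 1 ≤ i, k ≤ n. -/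
open Finset

noncomputable section

/-- The flip `P(u ⊗ v) = v ⊗ u` on `ℂ^d ⊗ ℂ^d`. -/
def flipM (d : ℕ) : M2 d := fun p q => if p.1 = q.2 ∧ p.2 = q.1 then 1 else 0

/-- Property (i): skew-symmetry `R(−z,−μ) = −P R(z,μ) P`. -/
def SkewSym {d : ℕ} (D : Set ℂ) (R : ℂ → ℂ → M2 d) : Prop :=
  ∀ z ∈ D, ∀ μ ∈ D, R (-z) (-μ) = - (flipM d * R z μ * flipM d)

/-- Property (ii): the associative Yang–Baxter equation. -/
def AYBE {d : ℕ} (D : Set ℂ) (R : ℂ → ℂ → M2 d) : Prop :=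
  ∀ z z' μ μ' : ℂ, z ∈ D → z' ∈ D → z + z' ∈ D → μ ∈ D → μ' ∈ D →
    μ - μ' ∈ D → μ' - μ ∈ D →
    leg (n := 3) (R z μ) 0 1 * leg (n := 3) (R z' μ') 1 2 =
      leg (n := 3) (R (z + z') μ') 0 2 * leg (n := 3) (R z (μ - μ')) 0 1 +
      leg (n := 3) (R z' (μ' - μ)) 1 2 * leg (n := 3) (R (z + z') μ) 0 2

/-- The operator `ŝ_{ij}`: `(ŝ_{ij} f)(x) = P_{ij} f(s_{ij}·x)`. -/
def shat {n d : ℕ} (i j : Fin n) (f : (Fin n → ℂ) → Uspin n d) :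
    (Fin n → ℂ) → Uspin n d :=
  fun x => (leg (flipM d) i j).mulVec (f (x ∘ Equiv.swap i j))

/-- The operator `θ_i := Σ_{j ≠ i} R_{ij}(x_i−x_j, λ_i−λ_j) ∘ ŝ_{ij}`. -/
def theta {n d : ℕ} (R : ℂ → ℂ → M2 d) (lam : Fin n → ℂ) (i : Fin n)
    (f : (Fin n → ℂ) → Uspin n d) : (Fin n → ℂ) → Uspin n d :=
  fun x => ∑ j ∈ univ.filter (fun j => j ≠ i),
    (leg (R (x i - x j) (lam i - lam j)) i j).mulVec (shat i j f x)

-- ==== aux ====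

abbrev Mn (n d : ℕ) := Matrix (Fin n → Fin d) (Fin n → Fin d) ℂ

lemma flipM_apply {d : ℕ} (p q : Fin d × Fin d) :
    flipM d p q = if p.1 = q.2 ∧ p.2 = q.1 then 1 else 0 := rfl

lemma leg_apply {n d : ℕ} (T : M2 d) (i j : Fin n) (u v : Fin n → Fin d) :
    leg T i j u v = T (u i, u j) (v i, v j) *
      (if ∀ t, t ≠ i → t ≠ j → u t = v t then 1 else 0) := by
  by_cases h : ∀ t, t ≠ i → t ≠ j → u t = v t
  · rw [if_pos h, mul_one, leg]
    have h1 : ∀ k ∈ univ.filter (fun k => k ≠ i ∧ k ≠ j),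
        (if u k = v k then (1 : ℂ) else 0) = 1 := by
      intro t ht
      simp only [mem_filter] at ht
      exact if_pos (h t ht.2.1 ht.2.2)
    rw [Finset.prod_congr rfl h1, Finset.prod_const_one, mul_one]
  · rw [if_neg h, mul_zero, leg]
    push_neg at h
    obtain ⟨t, ht1, ht2, hne⟩ := h
    have hmem : t ∈ univ.filter (fun k => k ≠ i ∧ k ≠ j) := by simp [ht1, ht2]
    have hz : (∏ k ∈ univ.filter (fun k => k ≠ i ∧ k ≠ j),
        if u k = v k then (1 : ℂ) else 0) = 0 :=
      Finset.prod_eq_zero hmem (if_neg hne)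
    rw [hz, mul_zero]

def Pmat {n d : ℕ} (σ : Equiv.Perm (Fin n)) : Mn n d :=
  fun u v => if u = v ∘ ⇑σ then 1 else 0

lemma mul_Pmat_apply {n d : ℕ} (M : Mn n d)
    (σ : Equiv.Perm (Fin n)) (u v : Fin n → Fin d) :
    (M * Pmat σ : Mn n d) u v = M u (v ∘ ⇑σ) := by
  simp [Matrix.mul_apply, Pmat, mul_ite, mul_one, mul_zero]

lemma Pmat_mul_apply {n d : ℕ} (M : Mn n d)
    (σ : Equiv.Perm (Fin n)) (u v : Fin n → Fin d) :
    (Pmat σ * M : Mn n d) u v = M (u ∘ ⇑σ.symm) v := by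
  have key : ∀ w : Fin n → Fin d, (u = w ∘ ⇑σ) ↔ (w = u ∘ ⇑σ.symm) := by
    intro w
    constructor
    · rintro rfl; funext t; simp
    · rintro rfl; funext t; simp
  simp only [Matrix.mul_apply, Pmat, key, ite_mul, one_mul, zero_mul]
  rw [Finset.sum_ite_eq' univ (u ∘ ⇑σ.symm)]
  simp

lemma Pmat_mul {n d : ℕ} (σ τ : Equiv.Perm (Fin n)) :
    (Pmat σ * Pmat τ : Mn n d) = Pmat (σ.trans τ) := by
  ext u v
  rw [mul_Pmat_apply]
  simp only [Pmat]
  apply if_congr _ rfl rfl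
  constructor
  · rintro rfl; funext t; simp [Equiv.coe_trans, Function.comp]
  · rintro rfl; funext t; simp [Equiv.coe_trans, Function.comp]

lemma leg_flip {n d : ℕ} (i j : Fin n) :
    (leg (flipM d) i j : Mn n d) = Pmat (Equiv.swap i j) := by
  ext u v
  rw [leg_apply]
  simp only [flipM_apply, Pmat]
  by_cases h2 : u = v ∘ ⇑(Equiv.swap i j)
  · rw [if_pos h2]
    have e1 : u i = v j := by rw [h2]; simp
    have e2 : u j = v i := by rw [h2]; simp
    have e3 : ∀ t, t ≠ i → t ≠ j → u t = v t := by
      intro t ht1 ht2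
      rw [h2]; simp [Equiv.swap_apply_of_ne_of_ne ht1 ht2]
    rw [if_pos ⟨e1, e2⟩, if_pos e3, one_mul]
  · rw [if_neg h2]
    by_cases hc : u i = v j ∧ u j = v i
    · by_cases hall : ∀ t, t ≠ i → t ≠ j → u t = v t
      · exfalso
        apply h2
        funext t
        by_cases ht1 : t = i
        · subst ht1; simpa [Equiv.swap_apply_left] using hc.1
        · by_cases ht2 : t = j
          · subst ht2; simpa [Equiv.swap_apply_right] using hc.2
          · rw [Function.comp_apply, Equiv.swap_apply_of_ne_of_ne ht1 ht2]
            exact hall t ht1 ht2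
      · rw [if_neg hall, mul_zero]
    · rw [if_neg hc, zero_mul]

lemma Pmat_leg_comm {n d : ℕ} (σ : Equiv.Perm (Fin n)) (T : M2 d) (k l : Fin n) :
    (Pmat σ * leg T k l : Mn n d) = leg T (σ.symm k) (σ.symm l) * Pmat σ := by
  ext u v
  rw [Pmat_mul_apply, mul_Pmat_apply, leg_apply, leg_apply]
  simp only [Function.comp_apply, Equiv.apply_symm_apply]
  congr 1
  apply if_congr _ rfl rfl
  constructor
  · intro h t ht1 ht2
    have := h (σ t) (fun e => ht1 (by rw [← e, Equiv.symm_apply_apply]))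
      (fun e => ht2 (by rw [← e, Equiv.symm_apply_apply]))
    rwa [Equiv.symm_apply_apply] at this
  · intro h t ht1 ht2
    have := h (σ.symm t) (fun e => ht1 (σ.symm.injective e))
      (fun e => ht2 (σ.symm.injective e))
    rwa [Equiv.apply_symm_apply] at this

lemma flipM_mul_apply {d : ℕ} (M : M2 d) (p q : Fin d × Fin d) :
    (flipM d * M) p q = M (p.2, p.1) q := by
  simp only [Matrix.mul_apply, flipM_apply, ite_mul, one_mul, zero_mul]
  have key : ∀ r : Fin d × Fin d, (p.1 = r.2 ∧ p.2 = r.1) ↔ r = (p.2, p.1) := by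
    intro r; constructor
    · rintro ⟨h1, h2⟩; exact Prod.ext h2.symm h1.symm
    · rintro rfl; exact ⟨rfl, rfl⟩
  simp only [key]
  rw [Finset.sum_ite_eq' univ (p.2, p.1)]
  simp

lemma mul_flipM_apply {d : ℕ} (M : M2 d) (p q : Fin d × Fin d) :
    (M * flipM d) p q = M p (q.2, q.1) := by
  simp only [Matrix.mul_apply, flipM_apply, mul_ite, mul_one, mul_zero]
  have key : ∀ r : Fin d × Fin d, (r.1 = q.2 ∧ r.2 = q.1) ↔ r = (q.2, q.1) := by
    intro r; constructor
    · rintro ⟨h1, h2⟩; exact Prod.ext h1 h2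
    · rintro rfl; exact ⟨rfl, rfl⟩
  simp only [key]
  rw [Finset.sum_ite_eq' univ (q.2, q.1)]
  simp

lemma leg_conj_flip {n d : ℕ} (T : M2 d) (i j : Fin n) :
    (leg (flipM d * T * flipM d) i j : Mn n d) = leg T j i := by
  ext u v
  simp only [leg]
  rw [mul_flipM_apply, flipM_mul_apply]
  congr 1
  apply Finset.prod_congr _ (fun _ _ => rfl)
  ext t; simp [and_comm]

lemma leg_neg {n d : ℕ} (T : M2 d) (i j : Fin n) :
    (leg (-T) i j : Mn n d) = - leg T i j := by
  ext u v
  simp [leg, neg_mul]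


-- ==== emb3 ====

def emb3 {n : ℕ} (d : ℕ) (a b c : Fin n)
    (W : Matrix (Fin 3 → Fin d) (Fin 3 → Fin d) ℂ) : Mn n d :=
  fun u v => W (fun r => u (![a, b, c] r)) (fun r => v (![a, b, c] r)) *
    (if ∀ t, t ≠ a → t ≠ b → t ≠ c → u t = v t then 1 else 0)

lemma emb3_add {n : ℕ} (d : ℕ) (a b c : Fin n)
    (W W' : Matrix (Fin 3 → Fin d) (Fin 3 → Fin d) ℂ) :
    emb3 d a b c (W + W') = emb3 d a b c W + emb3 d a b c W' := by
  ext u v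
  simp only [emb3, Matrix.add_apply]
  by_cases h : ∀ t, t ≠ a → t ≠ b → t ≠ c → u t = v t
  · simp only [if_pos h, mul_one]
  · simp only [if_neg h, mul_zero, add_zero]

lemma emb3_mul {n : ℕ} (d : ℕ) (a b c : Fin n)
    (hab : a ≠ b) (hac : a ≠ c) (hbc : b ≠ c)
    (W W' : Matrix (Fin 3 → Fin d) (Fin 3 → Fin d) ℂ) :
    emb3 d a b c (W * W') = emb3 d a b c W * emb3 d a b c W' := by
  ext u v
  rw [Matrix.mul_apply]
  simp only [emb3]
  -- abbreviations
  set e : (Fin n → Fin d) → (Fin n → Fin d) → ℂ :=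
    fun p q => if ∀ t, t ≠ a → t ≠ b → t ≠ c → p t = q t then 1 else 0 with he
  have hkey : ∀ w : Fin n → Fin d, e u w * e w v = e u w * e u v := by
    intro w
    by_cases h1 : ∀ t, t ≠ a → t ≠ b → t ≠ c → u t = w t
    · have : (∀ t, t ≠ a → t ≠ b → t ≠ c → w t = v t) ↔
          (∀ t, t ≠ a → t ≠ b → t ≠ c → u t = v t) := by
        constructor
        · intro h t h1' h2' h3'; rw [h1 t h1' h2' h3']; exact h t h1' h2' h3'
        · intro h t h1' h2' h3'; rw [← h1 t h1' h2' h3']; exact h t h1' h2' h3'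
      simp only [he]
      rw [if_pos h1]
      by_cases h2 : ∀ t, t ≠ a → t ≠ b → t ≠ c → w t = v t
      · rw [if_pos h2, if_pos (this.mp h2)]
      · rw [if_neg h2, if_neg (fun hh => h2 (this.mpr hh))]
    · simp only [he]; rw [if_neg h1, zero_mul, zero_mul]
  have step1 : ∀ w : Fin n → Fin d,
      (W (fun r => u (![a, b, c] r)) (fun r => w (![a, b, c] r)) * e u w) *
      (W' (fun r => w (![a, b, c] r)) (fun r => v (![a, b, c] r)) * e w v)
      = (W (fun r => u (![a, b, c] r)) (fun r => w (![a, b, c] r)) *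
         W' (fun r => w (![a, b, c] r)) (fun r => v (![a, b, c] r)) * e u w) * e u v := by
    intro w
    rw [mul_mul_mul_comm, hkey w]; ring
  rw [Finset.sum_congr rfl (fun w _ => step1 w), ← Finset.sum_mul]
  congr 1
  -- reparametrize the sum
  have step2 : ∀ w : Fin n → Fin d,
      W (fun r => u (![a, b, c] r)) (fun r => w (![a, b, c] r)) *
        W' (fun r => w (![a, b, c] r)) (fun r => v (![a, b, c] r)) * e u w
      = if (∀ t, t ≠ a → t ≠ b → t ≠ c → u t = w t) then
          W (fun r => u (![a, b, c] r)) (fun r => w (![a, b, c] r)) *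
          W' (fun r => w (![a, b, c] r)) (fun r => v (![a, b, c] r)) else 0 := by
    intro w
    simp only [he, mul_ite, mul_one, mul_zero]
  rw [Finset.sum_congr rfl (fun w _ => step2 w), ← Finset.sum_filter]
  rw [Matrix.mul_apply]
  refine (Finset.sum_nbij' (fun w => fun r => w (![a, b, c] r))
    (fun s => fun t => if t = a then s 0 else if t = b then s 1 else if t = c then s 2 else u t)
    (fun w _ => Finset.mem_univ _) ?_ ?_ ?_ ?_).symm
  · intro s _
    simp only [Finset.mem_filter, Finset.mem_univ, true_and]
    intro t h1 h2 h3
    simp [h1, h2, h3]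
  · intro w hw
    simp only [Finset.mem_filter, Finset.mem_univ, true_and] at hw
    funext t
    by_cases h1 : t = a
    · subst h1; simp
    · by_cases h2 : t = b
      · subst h2; simp [h1]
      · by_cases h3 : t = c
        · subst h3; simp [h1, h2]
        · simp only [if_neg h1, if_neg h2, if_neg h3]
          exact hw t h1 h2 h3
  · intro s _
    funext r
    fin_cases r
    · simp
    · simp [hab.symm]
    · simp [hac.symm, hbc.symm]
  · intro w _; rfl

lemma forall3_01 (p : Fin 3 → Prop) : (∀ r : Fin 3, r ≠ 0 → r ≠ 1 → p r) ↔ p 2 := by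
  constructor
  · intro h; exact h 2 (by decide) (by decide)
  · intro h r h0 h1
    fin_cases r
    · exact absurd rfl h0
    · exact absurd rfl h1
    · exact h

lemma forall3_12 (p : Fin 3 → Prop) : (∀ r : Fin 3, r ≠ 1 → r ≠ 2 → p r) ↔ p 0 := by
  constructor
  · intro h; exact h 0 (by decide) (by decide)
  · intro h r h0 h1
    fin_cases r
    · exact h
    · exact absurd rfl h0
    · exact absurd rfl h1

lemma forall3_02 (p : Fin 3 → Prop) : (∀ r : Fin 3, r ≠ 0 → r ≠ 2 → p r) ↔ p 1 := by
  constructor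
  · intro h; exact h 1 (by decide) (by decide)
  · intro h r h0 h1
    fin_cases r
    · exact absurd rfl h0
    · exact h
    · exact absurd rfl h1

lemma iteZeroMul {P Q : Prop} [Decidable P] [Decidable Q] :
    ((if P then (1:ℂ) else 0) * (if Q then (1:ℂ) else 0)) = if P ∧ Q then 1 else 0 := by
  by_cases hP : P <;> by_cases hQ : Q <;> simp [hP, hQ]


lemma vec3_two {n : ℕ} (a b c : Fin n) : (![a, b, c] : Fin 3 → Fin n) 2 = c := rfl

lemma emb3_leg01 {n : ℕ} (d : ℕ) (a b c : Fin n)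
    (hab : a ≠ b) (hac : a ≠ c) (hbc : b ≠ c) (T : M2 d) :
    emb3 d a b c (leg T 0 1) = leg T a b := by
  ext u v
  simp only [emb3]
  rw [leg_apply T (0 : Fin 3) 1, leg_apply T a b]
  simp only [Matrix.cons_val_zero, Matrix.cons_val_one, Matrix.head_cons]
  rw [mul_assoc]
  congr 1
  have h1 : (∀ t : Fin 3, t ≠ 0 → t ≠ 1 → u (![a, b, c] t) = v (![a, b, c] t)) ↔
      u c = v c := by
    rw [forall3_01 (p := fun t => u (![a, b, c] t) = v (![a, b, c] t)), vec3_two]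
  rw [if_congr h1 rfl rfl, iteZeroMul]
  apply if_congr _ rfl rfl
  constructor
  · rintro ⟨hc, hrest⟩ t hta htb
    by_cases htc : t = c
    · subst htc; exact hc
    · exact hrest t hta htb htc
  · intro h
    exact ⟨h c (fun e => hac e.symm) (fun e => hbc e.symm), fun t h1 h2 _ => h t h1 h2⟩

lemma emb3_leg12 {n : ℕ} (d : ℕ) (a b c : Fin n)
    (hab : a ≠ b) (hac : a ≠ c) (hbc : b ≠ c) (T : M2 d) :
    emb3 d a b c (leg T 1 2) = leg T b c := by
  ext u v
  simp only [emb3]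
  rw [leg_apply T (1 : Fin 3) 2, leg_apply T b c]
  simp only [Matrix.cons_val_zero, Matrix.cons_val_one, Matrix.head_cons, vec3_two]
  rw [mul_assoc]
  congr 1
  have h1 : (∀ t : Fin 3, t ≠ 1 → t ≠ 2 → u (![a, b, c] t) = v (![a, b, c] t)) ↔
      u a = v a := by
    rw [forall3_12 (p := fun t => u (![a, b, c] t) = v (![a, b, c] t))]
    simp
  rw [if_congr h1 rfl rfl, iteZeroMul]
  apply if_congr _ rfl rfl
  constructor
  · rintro ⟨ha, hrest⟩ t htb htc
    by_cases hta : t = a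
    · subst hta; exact ha
    · exact hrest t hta htb htc
  · intro h
    exact ⟨h a hab hac, fun t _ h2 h3 => h t h2 h3⟩

lemma emb3_leg02 {n : ℕ} (d : ℕ) (a b c : Fin n)
    (hab : a ≠ b) (hac : a ≠ c) (hbc : b ≠ c) (T : M2 d) :
    emb3 d a b c (leg T 0 2) = leg T a c := by
  ext u v
  simp only [emb3]
  rw [leg_apply T (0 : Fin 3) 2, leg_apply T a c]
  simp only [Matrix.cons_val_zero, Matrix.cons_val_one, Matrix.head_cons, vec3_two]
  rw [mul_assoc]
  congr 1
  have h1 : (∀ t : Fin 3, t ≠ 0 → t ≠ 2 → u (![a, b, c] t) = v (![a, b, c] t)) ↔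
      u b = v b := by
    rw [forall3_02 (p := fun t => u (![a, b, c] t) = v (![a, b, c] t))]
    simp
  rw [if_congr h1 rfl rfl, iteZeroMul]
  apply if_congr _ rfl rfl
  constructor
  · rintro ⟨hb, hrest⟩ t hta htc
    by_cases htb : t = b
    · subst htb; exact hb
    · exact hrest t hta htb htc
  · intro h
    exact ⟨h b hab.symm hbc, fun t h1 _ h3 => h t h1 h3⟩

lemma leg_mul_leg_apply {n d : ℕ} (T S : M2 d) (i j k l : Fin n)
    (hij : i ≠ j) (hik : i ≠ k) (hil : i ≠ l) (hjk : j ≠ k) (hjl : j ≠ l) (hkl : k ≠ l)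
    (u v : Fin n → Fin d) :
    (leg T i j * leg S k l : Mn n d) u v =
      T (u i, u j) (v i, v j) * S (u k, u l) (v k, v l) *
        (if ∀ t, t ≠ i → t ≠ j → t ≠ k → t ≠ l → u t = v t then 1 else 0) := by
  rw [Matrix.mul_apply]
  simp only [leg_apply]
  set w₀ : Fin n → Fin d := fun t => if t = i then v i else if t = j then v j else u t with hw₀
  rw [Finset.sum_eq_single w₀]
  · have e1 : w₀ i = v i := by simp [hw₀]
    have e2 : w₀ j = v j := by simp [hw₀, hij.symm]
    have e3 : w₀ k = u k := by simp [hw₀, hik.symm, hjk.symm]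
    have e4 : w₀ l = u l := by simp [hw₀, hil.symm, hjl.symm]
    have hC1 : ∀ t, t ≠ i → t ≠ j → u t = w₀ t := by
      intro t ht1 ht2; simp [hw₀, ht1, ht2]
    have hiff : (∀ t, t ≠ k → t ≠ l → w₀ t = v t) ↔
        (∀ t, t ≠ i → t ≠ j → t ≠ k → t ≠ l → u t = v t) := by
      constructor
      · intro h t h1 h2 h3 h4
        rw [← h t h3 h4]
        simp [hw₀, h1, h2]
      · intro h t h3 h4
        by_cases h1 : t = i
        · subst h1; exact e1
        · by_cases h2 : t = j
          · subst h2; exact e2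
          · rw [show w₀ t = u t by simp [hw₀, h1, h2]]
            exact h t h1 h2 h3 h4
    rw [e1, e2, e3, e4, if_pos hC1, if_congr hiff rfl rfl, mul_one]
    ring
  · intro w _ hwne
    by_cases hC1 : ∀ t, t ≠ i → t ≠ j → u t = w t
    · by_cases hC2 : ∀ t, t ≠ k → t ≠ l → w t = v t
      · exfalso
        apply hwne
        funext t
        by_cases h1 : t = i
        · rw [h1, hC2 i hik hil]; simp [hw₀]
        · by_cases h2 : t = j
          · rw [h2, hC2 j hjk hjl]; simp [hw₀, hij.symm]
          · rw [← hC1 t h1 h2]; simp [hw₀, h1, h2]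
      · rw [if_neg hC2, mul_zero, mul_zero]
    · rw [if_neg hC1, mul_zero, zero_mul]
  · intro h
    exact absurd (Finset.mem_univ w₀) h

lemma leg_mul_leg_comm {n d : ℕ} (T S : M2 d) (i j k l : Fin n)
    (hij : i ≠ j) (hik : i ≠ k) (hil : i ≠ l) (hjk : j ≠ k) (hjl : j ≠ l) (hkl : k ≠ l) :
    (leg T i j * leg S k l : Mn n d) = leg S k l * leg T i j := by
  ext u v
  rw [leg_mul_leg_apply T S i j k l hij hik hil hjk hjl hkl,
    leg_mul_leg_apply S T k l i j hkl hik.symm hjk.symm hil.symm hjl.symm hij]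
  rw [mul_comm (T (u i, u j) (v i, v j)) (S (u k, u l) (v k, v l))]
  congr 1
  apply if_congr _ rfl rfl
  constructor
  · intro h t h1 h2 h3 h4; exact h t h3 h4 h1 h2
  · intro h t h1 h2 h3 h4; exact h t h3 h4 h1 h2



-- ==== step A ====

lemma mulVec_sum' {n d : ℕ} {ι : Type*} (s : Finset ι) (A : Mn n d)
    (v : ι → (Fin n → Fin d) → ℂ) :
    A.mulVec (∑ i ∈ s, v i) = ∑ i ∈ s, A.mulVec (v i) := by
  funext u
  simp only [Matrix.mulVec, dotProduct, Finset.sum_apply, Finset.mul_sum]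
  exact Finset.sum_comm

def Gterm {n d : ℕ} (R : ℂ → ℂ → M2 d) (lam : Fin n → ℂ)
    (f : (Fin n → ℂ) → Uspin n d) (x : Fin n → ℂ) (i j k l : Fin n) : Uspin n d :=
  ((leg (R (x i - x j) (lam i - lam j)) i j *
    leg (R ((x ∘ ⇑(Equiv.swap i j)) k - (x ∘ ⇑(Equiv.swap i j)) l) (lam k - lam l))
      (Equiv.swap i j k) (Equiv.swap i j l)) *
   Pmat ((Equiv.swap i j).trans (Equiv.swap k l))).mulVec
    (f ((x ∘ ⇑(Equiv.swap i j)) ∘ ⇑(Equiv.swap k l)))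

lemma theta_theta {n d : ℕ} (R : ℂ → ℂ → M2 d) (lam : Fin n → ℂ)
    (f : (Fin n → ℂ) → Uspin n d) (x : Fin n → ℂ) (i k : Fin n) :
    theta R lam i (theta R lam k f) x =
      ∑ j ∈ univ.filter (fun j => j ≠ i), ∑ l ∈ univ.filter (fun l => l ≠ k),
        Gterm R lam f x i j k l := by
  simp only [theta, shat]
  apply Finset.sum_congr rfl
  intro j _
  rw [mulVec_sum', mulVec_sum']
  apply Finset.sum_congr rfl
  intro l _
  rw [leg_flip i j, leg_flip k l]
  have hmat : Pmat (Equiv.swap i j) *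
      (leg (R ((x ∘ ⇑(Equiv.swap i j)) k - (x ∘ ⇑(Equiv.swap i j)) l) (lam k - lam l)) k l *
        Pmat (Equiv.swap k l))
      = leg (R ((x ∘ ⇑(Equiv.swap i j)) k - (x ∘ ⇑(Equiv.swap i j)) l) (lam k - lam l))
          (Equiv.swap i j k) (Equiv.swap i j l) *
        Pmat ((Equiv.swap i j).trans (Equiv.swap k l)) := by
    rw [← mul_assoc, Pmat_leg_comm, Equiv.symm_swap, mul_assoc, Pmat_mul]
  symm
  rw [Gterm, mul_assoc, ← hmat, ← Matrix.mulVec_mulVec, ← Matrix.mulVec_mulVec,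
    ← Matrix.mulVec_mulVec]

-- ==== sum decomposition ====

lemma sum_decomp {β : Type*} [AddCommMonoid β] {n : ℕ} (i k : Fin n) (hik : i ≠ k)
    (G : Fin n → Fin n → β) :
    (∑ j ∈ univ.filter (fun j => j ≠ i), ∑ l ∈ univ.filter (fun l => l ≠ k), G j l)
      = G k i + ∑ m ∈ univ.filter (fun m => m ≠ i ∧ m ≠ k), G k m
        + ∑ m ∈ univ.filter (fun m => m ≠ i ∧ m ≠ k),
            (G m i + G m m + ∑ l ∈ (univ.filter (fun l => l ≠ i ∧ l ≠ k)).erase m, G m l) := by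
  set M := univ.filter (fun m : Fin n => m ≠ i ∧ m ≠ k) with hM
  have hMmem : ∀ t, t ∈ M ↔ (t ≠ i ∧ t ≠ k) := by
    intro t; simp [hM]
  have hout : univ.filter (fun j : Fin n => j ≠ i) = insert k M := by
    ext t
    simp only [mem_filter, mem_univ, true_and, mem_insert, hMmem]
    constructor
    · intro h
      by_cases hk : t = k
      · exact Or.inl hk
      · exact Or.inr ⟨h, hk⟩
    · rintro (rfl | ⟨h, _⟩)
      · exact hik.symm
      · exact h
  have hin1 : univ.filter (fun l : Fin n => l ≠ k) = insert i M := by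
    ext t
    simp only [mem_filter, mem_univ, true_and, mem_insert, hMmem]
    constructor
    · intro h
      by_cases hi : t = i
      · exact Or.inl hi
      · exact Or.inr ⟨hi, h⟩
    · rintro (rfl | ⟨_, h⟩)
      · exact hik
      · exact h
  have hin2 : ∀ m ∈ M, univ.filter (fun l : Fin n => l ≠ k)
      = insert i (insert m (M.erase m)) := by
    intro m hm
    rw [hMmem] at hm
    ext t
    simp only [mem_filter, mem_univ, true_and, mem_insert, Finset.mem_erase, hMmem]
    constructor
    · intro h
      by_cases hi : t = i
      · exact Or.inl hi
      · by_cases hm' : t = m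
        · exact Or.inr (Or.inl hm')
        · exact Or.inr (Or.inr ⟨hm', hi, h⟩)
    · rintro (rfl | rfl | ⟨_, _, h⟩)
      · exact hik
      · exact hm.2
      · exact h
  rw [hout, Finset.sum_insert (by simp [hMmem])]
  have hrow : ∀ m ∈ M, (∑ l ∈ univ.filter (fun l : Fin n => l ≠ k), G m l)
      = G m i + G m m + ∑ l ∈ M.erase m, G m l := by
    intro m hm
    have hm' := (hMmem m).mp hm
    rw [hin2 m hm, Finset.sum_insert, Finset.sum_insert, ← add_assoc]
    · simp
    · simp only [mem_insert, Finset.mem_erase, hMmem, not_or]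
      refine ⟨fun e => hm'.1 e.symm, ?_⟩
      rintro ⟨-, hii, -⟩
      exact hii rfl
  rw [Finset.sum_congr rfl hrow, hin1, Finset.sum_insert (by simp [hMmem])]

-- swap identities
lemma swapA {n : ℕ} (i k m : Fin n) (hik : i ≠ k) (hmi : m ≠ i) (hmk : m ≠ k) :
    (Equiv.swap i k).trans (Equiv.swap k m) = (Equiv.swap k m).trans (Equiv.swap i m) := by
  ext t
  simp only [Equiv.trans_apply, Equiv.swap_apply_def]
  split_ifs <;> simp_all

lemma swapB {n : ℕ} (i k m : Fin n) (hik : i ≠ k) (hmi : m ≠ i) (hmk : m ≠ k) :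
    (Equiv.swap i m).trans (Equiv.swap k i) = (Equiv.swap k m).trans (Equiv.swap i m) := by
  ext t
  simp only [Equiv.trans_apply, Equiv.swap_apply_def]
  split_ifs <;> simp_all

lemma swapC {n : ℕ} (i k m : Fin n) (hik : i ≠ k) (hmi : m ≠ i) (hmk : m ≠ k) :
    (Equiv.swap k m).trans (Equiv.swap i k) = (Equiv.swap i m).trans (Equiv.swap k m) := by
  ext t
  simp only [Equiv.trans_apply, Equiv.swap_apply_def]
  split_ifs <;> simp_all

lemma swapD {n : ℕ} (i k m : Fin n) (hik : i ≠ k) (hmi : m ≠ i) (hmk : m ≠ k) :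
    (Equiv.swap k i).trans (Equiv.swap i m) = (Equiv.swap i m).trans (Equiv.swap k m) := by
  ext t
  simp only [Equiv.trans_apply, Equiv.swap_apply_def]
  split_ifs <;> simp_all

lemma swapDisj {n : ℕ} (i j k l : Fin n) (h1 : i ≠ k) (h2 : i ≠ l) (h3 : j ≠ k) (h4 : j ≠ l) :
    (Equiv.swap i j).trans (Equiv.swap k l) = (Equiv.swap k l).trans (Equiv.swap i j) := by
  ext t
  simp only [Equiv.trans_apply, Equiv.swap_apply_def]
  split_ifs <;> simp_all

lemma swap_trans_self {n : ℕ} (i k : Fin n) :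
    (Equiv.swap i k).trans (Equiv.swap k i) = Equiv.refl (Fin n) := by
  rw [Equiv.swap_comm]
  ext t
  simp

lemma comp_comp_eq {n : ℕ} (x : Fin n → ℂ) (σ τ : Equiv.Perm (Fin n)) :
    (x ∘ ⇑σ) ∘ ⇑τ = x ∘ ⇑(τ.trans σ) := by
  funext t; simp [Equiv.trans_apply]



lemma skew_flip {n d : ℕ} (D : Set ℂ) (R : ℂ → ℂ → M2 d) (hskew : SkewSym D R)
    {z μ : ℂ} (hz : z ∈ D) (hμ : μ ∈ D) (p q : Fin n) :
    (leg (R z μ) p q : Mn n d) = - leg (R (-z) (-μ)) q p := by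
  rw [hskew z hz μ hμ, leg_neg, neg_neg, leg_conj_flip]

lemma sum_erase_symm {β : Type*} [AddCommMonoid β] {α : Type*} [DecidableEq α]
    (s : Finset α) (H : α → α → β) :
    (∑ m ∈ s, ∑ l ∈ s.erase m, H m l) = ∑ m ∈ s, ∑ l ∈ s.erase m, H l m := by
  have h : ∀ K : α → α → β, (∑ m ∈ s, ∑ l ∈ s.erase m, K m l)
      = ∑ m ∈ s, ∑ l ∈ s, if l ≠ m then K m l else 0 := by
    intro K
    apply Finset.sum_congr rfl
    intro m _
    rw [← Finset.filter_ne', Finset.sum_filter]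
  rw [h, h, Finset.sum_comm]
  apply Finset.sum_congr rfl
  intro a _
  apply Finset.sum_congr rfl
  intro b _
  exact if_congr ne_comm rfl rfl

lemma key1 {n d : ℕ} (D : Set ℂ) (R : ℂ → ℂ → M2 d)
    (hskew : SkewSym D R) (haybe : AYBE D R)
    (lam : Fin n → ℂ) (x : Fin n → ℂ) (f : (Fin n → ℂ) → Uspin n d)
    (hD : ∀ p q : Fin n, p ≠ q → x p - x q ∈ D)
    (hL : ∀ p q : Fin n, p ≠ q → lam p - lam q ∈ D)
    (i k m : Fin n) (hik : i ≠ k) (hmi : m ≠ i) (hmk : m ≠ k) :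
    Gterm R lam f x i k k m + Gterm R lam f x i m k i = Gterm R lam f x k m i m := by
  simp only [Gterm, Function.comp_apply]
  rw [Equiv.swap_apply_right i k, Equiv.swap_apply_of_ne_of_ne hmi hmk,
    Equiv.swap_apply_of_ne_of_ne hik.symm hmk.symm, Equiv.swap_apply_left i m,
    Equiv.swap_apply_of_ne_of_ne hik hmi.symm, Equiv.swap_apply_right k m]
  rw [swapA i k m hik hmi hmk, swapB i k m hik hmi hmk]
  rw [comp_comp_eq x (Equiv.swap i k) (Equiv.swap k m),
    comp_comp_eq x (Equiv.swap i m) (Equiv.swap k i),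
    comp_comp_eq x (Equiv.swap k m) (Equiv.swap i m),
    swapC i k m hik hmi hmk, swapD i k m hik hmi hmk]
  have hz1 : x m - x k ∈ D := hD m k hmk
  have hz2 : x k - x i ∈ D := hD k i hik.symm
  have hz3 : x m - x i ∈ D := hD m i hmi
  have hm1 : lam m - lam k ∈ D := hL m k hmk
  have hm2 : lam m - lam i ∈ D := hL m i hmi
  have hm3 : lam i - lam k ∈ D := hL i k hik
  have hm4 : lam k - lam i ∈ D := hL k i hik.symm
  have hsum : x m - x k + (x k - x i) = x m - x i := by ring
  have hd1 : lam m - lam k - (lam m - lam i) = lam i - lam k := by ring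
  have hd2 : lam m - lam i - (lam m - lam k) = lam k - lam i := by ring
  have h3 := haybe (x m - x k) (x k - x i) (lam m - lam k) (lam m - lam i)
    hz1 hz2 (by rw [hsum]; exact hz3) hm1 hm2 (by rw [hd1]; exact hm3)
    (by rw [hd2]; exact hm4)
  have hE := congrArg (emb3 (n := n) d m k i) h3
  rw [emb3_mul d m k i hmk hmi hik.symm] at hE
  rw [emb3_add] at hE
  rw [emb3_mul d m k i hmk hmi hik.symm] at hE
  rw [emb3_mul d m k i hmk hmi hik.symm] at hE
  simp only [emb3_leg01 d m k i hmk hmi hik.symm,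
    emb3_leg12 d m k i hmk hmi hik.symm,
    emb3_leg02 d m k i hmk hmi hik.symm] at hE
  rw [hsum, hd1, hd2] at hE
  rw [skew_flip D R hskew hz1 hm1 m k] at hE
  rw [skew_flip D R hskew hz2 hm2 k i] at hE
  rw [skew_flip D R hskew hz3 hm2 m i] at hE
  rw [skew_flip D R hskew hz1 hm3 m k] at hE
  rw [skew_flip D R hskew hz2 hm4 k i] at hE
  rw [skew_flip D R hskew hz3 hm1 m i] at hE
  simp only [neg_sub, neg_mul_neg] at hE
  have hstar : leg (R (x i - x k) (lam i - lam k)) i k *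
        leg (R (x i - x m) (lam k - lam m)) i m +
      leg (R (x i - x m) (lam i - lam m)) i m *
        leg (R (x k - x m) (lam k - lam i)) k m =
      (leg (R (x k - x m) (lam k - lam m)) k m *
        leg (R (x i - x k) (lam i - lam m)) i k : Mn n d) := by
    rw [add_comm]
    exact hE.symm
  rw [← Matrix.add_mulVec, ← add_mul, hstar]

lemma keyDiag {n d : ℕ} (D : Set ℂ) (R : ℂ → ℂ → M2 d)
    (hskew : SkewSym D R)
    (lam : Fin n → ℂ) (x : Fin n → ℂ) (f : (Fin n → ℂ) → Uspin n d)
    (hD : ∀ p q : Fin n, p ≠ q → x p - x q ∈ D)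
    (hL : ∀ p q : Fin n, p ≠ q → lam p - lam q ∈ D)
    (i k : Fin n) (hik : i ≠ k) :
    Gterm R lam f x i k k i = Gterm R lam f x k i i k := by
  simp only [Gterm, Function.comp_apply]
  rw [Equiv.swap_apply_right i k, Equiv.swap_apply_left i k,
    Equiv.swap_apply_right k i, Equiv.swap_apply_left k i]
  rw [comp_comp_eq x (Equiv.swap i k) (Equiv.swap k i),
    comp_comp_eq x (Equiv.swap k i) (Equiv.swap i k),
    swap_trans_self i k, swap_trans_self k i]
  rw [skew_flip D R hskew (hD k i hik.symm) (hL k i hik.symm) k i,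
    skew_flip D R hskew (hD k i hik.symm) (hL i k hik) k i]
  simp only [neg_sub, neg_mul_neg]

lemma keyGen {n d : ℕ} (R : ℂ → ℂ → M2 d)
    (lam : Fin n → ℂ) (x : Fin n → ℂ) (f : (Fin n → ℂ) → Uspin n d)
    (i k m l : Fin n) (hik : i ≠ k) (hmi : m ≠ i) (hmk : m ≠ k)
    (hli : l ≠ i) (hlk : l ≠ k) (hlm : l ≠ m) :
    Gterm R lam f x i m k l = Gterm R lam f x k l i m := by
  simp only [Gterm, Function.comp_apply]
  rw [Equiv.swap_apply_of_ne_of_ne hik.symm hmk.symm,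
    Equiv.swap_apply_of_ne_of_ne hli hlm,
    Equiv.swap_apply_of_ne_of_ne hik hli.symm,
    Equiv.swap_apply_of_ne_of_ne hmk hlm.symm]
  rw [comp_comp_eq x (Equiv.swap i m) (Equiv.swap k l),
    comp_comp_eq x (Equiv.swap k l) (Equiv.swap i m)]
  rw [swapDisj i m k l hik hli.symm hmk hlm.symm]
  rw [swapDisj k l i m hik.symm hmk.symm hli hlm]
  rw [leg_mul_leg_comm _ _ i m k l hmi.symm hik hli.symm hmk hlm.symm hlk.symm]



set_option maxHeartbeats 1000000 in
/-- if `R` is skew-symmetric and satisfies the AYBE, then the operators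
`θ_i` pairwise commute on holomorphic `U`-valued functions on `Ω`. -/
theorem theta_commute
    (n d : ℕ) (hn : 2 ≤ n) (hd : 1 ≤ d)
    (D : Set ℂ) (hDopen : IsOpen D) (hDsym : ∀ z ∈ D, -z ∈ D)
    (R : ℂ → ℂ → M2 d)
    (hRhol : ∀ a b, DifferentiableOn ℂ (fun p : ℂ × ℂ => R p.1 p.2 a b) (D ×ˢ D))
    (hskew : SkewSym D R) (haybe : AYBE D R)
    (lam : Fin n → ℂ) (hlam : ∀ i j : Fin n, i ≠ j → lam i - lam j ∈ D)
    (Ω : Set (Fin n → ℂ)) (hΩopen : IsOpen Ω) (hΩne : Ω.Nonempty)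
    (hΩperm : ∀ σ : Equiv.Perm (Fin n), ∀ x ∈ Ω, (x ∘ σ) ∈ Ω)
    (hΩD : ∀ x ∈ Ω, ∀ i j : Fin n, i ≠ j → x i - x j ∈ D)
    (i k : Fin n)
    (f : (Fin n → ℂ) → Uspin n d) (hf : DifferentiableOn ℂ f Ω) :
    ∀ x ∈ Ω,
      theta R lam i (theta R lam k f) x = theta R lam k (theta R lam i f) x := by
  intro x hx
  rcases eq_or_ne i k with rfl | hik
  · rfl
  have hD : ∀ p q : Fin n, p ≠ q → x p - x q ∈ D := fun p q h => hΩD x hx p q h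
  rw [theta_theta R lam f x i k, theta_theta R lam f x k i]
  rw [sum_decomp i k hik (fun j l => Gterm R lam f x i j k l)]
  rw [sum_decomp k i hik.symm (fun l j => Gterm R lam f x k l i j)]
  have hMswap : univ.filter (fun m : Fin n => m ≠ k ∧ m ≠ i)
      = univ.filter (fun m : Fin n => m ≠ i ∧ m ≠ k) := by
    ext t; simp [and_comm]
  rw [hMswap]
  set M := univ.filter (fun m : Fin n => m ≠ i ∧ m ≠ k) with hM
  have h1 : Gterm R lam f x i k k i = Gterm R lam f x k i i k :=
    keyDiag D R hskew lam x f hD hlam i k hik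
  have h3 : (∑ m ∈ M, ∑ l ∈ M.erase m, Gterm R lam f x i m k l)
      = ∑ m ∈ M, ∑ l ∈ M.erase m, Gterm R lam f x k m i l := by
    have e1 : (∑ m ∈ M, ∑ l ∈ M.erase m, Gterm R lam f x i m k l)
        = ∑ m ∈ M, ∑ l ∈ M.erase m, Gterm R lam f x k l i m := by
      apply Finset.sum_congr rfl
      intro m hm
      apply Finset.sum_congr rfl
      intro l hl
      simp only [hM, Finset.mem_erase, mem_filter, mem_univ, true_and] at hm hl
      exact keyGen R lam x f i k m l hik hm.1 hm.2 hl.2.1 hl.2.2 hl.1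
    rw [e1]
    exact (sum_erase_symm (β := Uspin n d) M (fun a b => Gterm R lam f x k a i b)).symm
  have hx1 : (∑ m ∈ M, Gterm R lam f x i k k m) + (∑ m ∈ M, Gterm R lam f x i m k i)
      = ∑ m ∈ M, Gterm R lam f x k m i m := by
    rw [← Finset.sum_add_distrib]
    apply Finset.sum_congr rfl
    intro m hm
    simp only [hM, mem_filter, mem_univ, true_and] at hm
    exact key1 D R hskew haybe lam x f hD hlam i k m hik hm.1 hm.2
  have hx2 : (∑ m ∈ M, Gterm R lam f x k i i m) + (∑ m ∈ M, Gterm R lam f x k m i k)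
      = ∑ m ∈ M, Gterm R lam f x i m k m := by
    rw [← Finset.sum_add_distrib]
    apply Finset.sum_congr rfl
    intro m hm
    simp only [hM, mem_filter, mem_univ, true_and] at hm
    exact key1 D R hskew haybe lam x f hD hlam k i m hik.symm hm.2 hm.1
  simp only [Finset.sum_add_distrib]
  linear_combination (h1 + h3 + hx1) - hx2

end
end

section
/- Let x ∈ (A∗W)^W. Then Res(x) ∈ A^W, and for all x, y ∈ (A∗W)^W one has Res(x·y) = Res(x)·Res(y). Together with Res(1) = 1, the map Res therefore restricts to a k-algebra homomorphism from the fixed-point subalgebra (A∗W)^W to the invariant subalgebra A^W. -/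
open Finset

noncomputable section

/-- The product of the crossed product `A∗W`, modelled on `W → A` (finite `W`):
`(a δ_u)(b δ_v) = (a · u(b)) δ_{uv}`, i.e. `(x·y)(w) = Σ_u x(u) · u(y(u⁻¹ w))`. -/
def cpMul {A W : Type*} [Ring A] [Group W] [Fintype W] [MulSemiringAction W A]
    (x y : W → A) : W → A :=
  fun w => ∑ u : W, x u * (u • y (u⁻¹ * w))

/-- The unit `1·δ_e` of the crossed product `A∗W`. -/
def cpOne {A W : Type*} [Ring A] [Group W] [DecidableEq W] : W → A :=
  fun w => if w = 1 then 1 else 0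

/-- The `W`-action on `A∗W`: `w·(a δ_u) = w(a) δ_{w u w⁻¹}`. -/
def cpConj {A W : Type*} [Ring A] [Group W] [MulSemiringAction W A]
    (w : W) (x : W → A) : W → A :=
  fun u => w • x (w⁻¹ * u * w)

/-- The restriction map `Res : A∗W → A`, `Σ a_w δ_w ↦ Σ a_w`. -/
def cpRes {A W : Type*} [AddCommMonoid A] [Fintype W] (x : W → A) : A :=
  ∑ w : W, x w

/-- `Res` maps `(A∗W)^W` into `A^W`, is multiplicative on `(A∗W)^W`, and
sends `1` to `1`; hence it restricts to a `k`-algebra homomorphism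
`(A∗W)^W → A^W`. -/
theorem res_algebra_hom
    (k : Type*) [Field k] (A : Type*) [Ring A] [Algebra k A]
    (W : Type*) [Group W] [Fintype W] [DecidableEq W]
    [MulSemiringAction W A] [SMulCommClass W k A] :
    (∀ x : W → A, (∀ w : W, cpConj w x = x) →
      ∀ w : W, w • cpRes x = cpRes x) ∧
    (∀ x y : W → A, (∀ w : W, cpConj w x = x) → (∀ w : W, cpConj w y = y) →
      cpRes (cpMul x y) = cpRes x * cpRes y) ∧
    cpRes (cpOne : W → A) = 1 := by
  have part1 : ∀ x : W → A, (∀ w : W, cpConj w x = x) →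
      ∀ w : W, w • cpRes x = cpRes x := by
    intro x h w
    unfold cpRes
    rw [smul_sum]
    calc ∑ u : W, w • x u = ∑ u : W, x (w * u * w⁻¹) := by
          refine Finset.sum_congr rfl fun u _ => ?_
          have := congrFun (h w) (w * u * w⁻¹)
          simp only [cpConj] at this
          rw [← this]
          group
        _ = ∑ v : W, x v := by
          exact Equiv.sum_comp ((Equiv.mulLeft w).trans (Equiv.mulRight w⁻¹)) x
  refine ⟨part1, ?_, ?_⟩
  · intro x y hx hy
    unfold cpRes cpMul
    rw [Finset.sum_comm]
    calc ∑ u : W, ∑ w : W, x u * (u • y (u⁻¹ * w))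
        = ∑ u : W, x u * (u • ∑ w : W, y (u⁻¹ * w)) := by
          refine Finset.sum_congr rfl fun u _ => ?_
          rw [smul_sum, Finset.mul_sum]
      _ = ∑ u : W, x u * (u • ∑ w : W, y w) := by
          refine Finset.sum_congr rfl fun u _ => ?_
          congr 1
          exact congrArg _ (Equiv.sum_comp (Equiv.mulLeft u⁻¹) y)
      _ = (∑ u : W, x u) * ∑ w : W, y w := by
          rw [Finset.sum_mul]
          refine Finset.sum_congr rfl fun u _ => ?_
          have := part1 y hy u
          unfold cpRes at this
          rw [this]
  · simp [cpRes, cpOne]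

end
end

section
/- The map Res^∨ sends the fixed-point subalgebra (A∗(W×W))^W into (A∗W^∨)^W, and its restriction to these invariant subalgebras is a k-algebra homomorphism: Res^∨(x·y) = Res^∨(x)·Res^∨(y) for all x, y ∈ (A∗(W×W))^W, and Res^∨(1) = 1. -/
open Finset

noncomputable section

/-- The product of the crossed product `A∗(W×W)`, modelled on `W × W → A`:
`(x·y)(q) = Σ_{u : W×W} x(u) · u(y(u⁻¹ q))`, where `W × W` acts on `A` via the two
commuting actions `û` and `v^∨` (i.e. an action of `W × W`). -/
def cpMul2 {A W : Type*} [Ring A] [Group W] [Fintype W]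
    [MulSemiringAction (W × W) A] (x y : W × W → A) : W × W → A :=
  fun q => ∑ u : W × W, x u * (u • y (u⁻¹ * q))

/-- The product of the crossed product `A∗W^∨` for the `∨`-action alone:
`(a δ^∨_v)(b δ^∨_{v'}) = (a · v^∨(b)) δ^∨_{v v'}`. -/
def cpMulVee {A W : Type*} [Ring A] [Group W] [Fintype W]
    [MulSemiringAction (W × W) A] (x y : W → A) : W → A :=
  fun v => ∑ u : W, x u * ((((1 : W), u) : W × W) • y (u⁻¹ * v))

/-- The units of `A∗(W×W)` and of `A∗W^∨`. -/
def cpOne2 {A W : Type*} [Ring A] [Group W] [DecidableEq W] : W × W → A :=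
  fun q => if q = 1 then 1 else 0

def cpOneVee {A W : Type*} [Ring A] [Group W] [DecidableEq W] : W → A :=
  fun v => if v = 1 then 1 else 0

/-- The map `Res^∨ : A∗(W×W) → A∗W^∨`, `a δ_{(u,v)} ↦ a δ^∨_{v u⁻¹}`. -/
def cpResVee {A W : Type*} [AddCommMonoid A] [Group W] [Fintype W]
    (x : W × W → A) : W → A :=
  fun t => ∑ u : W, x (u, t * u)

/-- The `W`-action on `A∗(W×W)` by conjugation with `δ_{(w,w)}`:
`w·(a δ_{(u,v)}) = (w,w)(a) δ_{(w u w⁻¹, w v w⁻¹)}`. -/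
def cpConj2 {A W : Type*} [Ring A] [Group W] [MulSemiringAction (W × W) A]
    (w : W) (x : W × W → A) : W × W → A :=
  fun q => ((w, w) : W × W) • x (w⁻¹ * q.1 * w, w⁻¹ * q.2 * w)

/-- The `W`-action on `A∗W^∨`: `w·(a δ^∨_v) = ŵ(w^∨(a)) δ^∨_{w v w⁻¹}`. -/
def cpConjVee {A W : Type*} [Ring A] [Group W] [MulSemiringAction (W × W) A]
    (w : W) (y : W → A) : W → A :=
  fun v => ((w, w) : W × W) • y (w⁻¹ * v * w)

/-- `Res^∨` maps `(A∗(W×W))^W` into `(A∗W^∨)^W`, and on these invariant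
subalgebras it is a `k`-algebra homomorphism: multiplicative and unital. -/
theorem resVee_algebra_hom
    (k : Type*) [Field k] (A : Type*) [Ring A] [Algebra k A]
    (W : Type*) [Group W] [Fintype W] [DecidableEq W]
    [MulSemiringAction (W × W) A] [SMulCommClass (W × W) k A] :
    (∀ x : W × W → A, (∀ w : W, cpConj2 w x = x) →
      ∀ w : W, cpConjVee (A := A) w (cpResVee x) = cpResVee x) ∧
    (∀ x y : W × W → A, (∀ w : W, cpConj2 w x = x) → (∀ w : W, cpConj2 w y = y) →
      cpResVee (cpMul2 x y) = cpMulVee (cpResVee x) (cpResVee y)) ∧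
    cpResVee (cpOne2 : W × W → A) = (cpOneVee : W → A) := by
  constructor
  · intro x hx w
    funext v
    simp only [cpConjVee, cpResVee, Finset.smul_sum]
    refine Fintype.sum_equiv
      ⟨fun u => w * u * w⁻¹, fun u => w⁻¹ * u * w, fun u => by group, fun u => by group⟩
      _ _ ?_
    intro u
    have h := congrFun (hx w) ((w * u * w⁻¹, v * (w * u * w⁻¹)) : W × W)
    simp only [cpConj2] at h
    have e1 : w⁻¹ * (w * u * w⁻¹) * w = u := by group
    have e2 : w⁻¹ * (v * (w * u * w⁻¹)) * w = w⁻¹ * v * w * u := by group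
    rw [e1, e2] at h
    exact h.symm ▸ rfl
  constructor
  · intro x y hx hy
    funext t
    simp only [cpResVee, cpMul2, cpMulVee, Finset.smul_sum, Finset.sum_mul, Finset.mul_sum]
    have L : ∑ z : W × (W × W), x z.2 * z.2 • y (z.2⁻¹ * (z.1, t * z.1))
        = ∑ u : W, ∑ p : W × W, x p * p • y (p⁻¹ * (u, t * u)) := Fintype.sum_prod_type _
    have R : ∑ z : W × (W × W), x (z.2.2, z.1 * z.2.2) *
          ((((1 : W), z.1) : W × W) • y (z.2.1, z.1⁻¹ * t * z.2.1))
        = ∑ s : W, ∑ c : W, ∑ a : W, x (a, s * a) *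
          ((((1 : W), s) : W × W) • y (c, s⁻¹ * t * c)) := by
      rw [Fintype.sum_prod_type]
      exact Finset.sum_congr rfl fun s _ => Fintype.sum_prod_type _
    rw [← L, ← R]
    refine (Fintype.sum_equiv
      (⟨fun z => (z.2.1 * z.2.2, (z.2.2, z.1 * z.2.2)),
        fun z => (z.2.2 * z.2.1⁻¹, (z.1 * z.2.1⁻¹, z.2.1)),
        fun z => by simp [mul_assoc], fun z => by simp [mul_assoc]⟩ :
        (W × W × W) ≃ (W × (W × W))) _ _ ?_).symm
    rintro ⟨s, c, a⟩
    simp only [Equiv.coe_fn_mk]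
    congr 1
    have h := congrFun (hy a) ((c, s⁻¹ * t * c) : W × W)
    simp only [cpConj2] at h
    rw [← h, smul_smul]
    congr 1
    · simp
    · congr 1
      simp only [Prod.inv_mk, Prod.mk_mul_mk, Prod.ext_iff]
      constructor <;> group
  · funext t
    by_cases h : t = 1
    · simp [cpResVee, cpOne2, cpOneVee, Prod.ext_iff, h]
    · have hu : ∀ u : W, ((u, t * u) : W × W) ≠ 1 := by
        rintro u he
        rw [Prod.ext_iff] at he
        obtain ⟨h1, h2⟩ := he
        rw [show u = 1 from h1, mul_one] at h2
        exact h h2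
      simp [cpResVee, cpOne2, cpOneVee, hu, h]

end
end

section
/- The function φ₀ satisfies the three properties of a scalar trigonometric solution of the associative Yang–Baxter equation: (a) skew-symmetry: φ₀(−z,−μ) = −φ₀(z,μ) for all z, μ ∈ ℂ ∖ 2πℤ; (b) the AYBE: φ₀(z,μ)·φ₀(z',μ') = φ₀(z+z',μ')·φ₀(z,μ−μ') + φ₀(z',μ'−μ)·φ₀(z+z',μ) whenever z, z', z+z', μ, μ', μ−μ', μ'−μ all lie in ℂ ∖ 2πℤ; (c) unitarity: φ₀(z,μ)·φ₀(−z,μ) = 1/(4 sin²(μ/2)) − 1/(4 sin²(z/2)) for all z, μ ∈ ℂ ∖ 2πℤ. -/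
noncomputable section

lemma aux_exp_ne_one (z : ℂ) (hz : ∀ m : ℤ, z ≠ 2 * (Real.pi : ℂ) * (m : ℂ)) :
    Complex.exp (Complex.I * z) ≠ 1 := by
  intro h
  rw [Complex.exp_eq_one_iff] at h
  obtain ⟨n, hn⟩ := h
  exact hz n (by linear_combination (-Complex.I) * hn + (z - 2*(Real.pi:ℂ)*n) * Complex.I_sq)

lemma aux_key (z : ℂ) :
    Complex.exp (z/2 * Complex.I) * Complex.exp (-(z/2) * Complex.I) = 1 := by
  rw [← Complex.exp_add]
  norm_num

lemma aux_sq (z : ℂ) :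
    Complex.exp (Complex.I * z) = Complex.exp (z/2 * Complex.I) ^ 2 := by
  rw [sq, ← Complex.exp_add]
  ring_nf

lemma aux_cot_half (z : ℂ) (hE : Complex.exp (Complex.I * z) ≠ 1) :
    Complex.cot (z / 2)
      = Complex.I * (Complex.exp (Complex.I * z) + 1) / (Complex.exp (Complex.I * z) - 1) := by
  have hs : Complex.sin (z/2)
      = (Complex.exp (-(z/2) * Complex.I) - Complex.exp (z/2 * Complex.I)) * Complex.I / 2 := rfl
  have hc : Complex.cos (z/2)
      = (Complex.exp (z/2 * Complex.I) + Complex.exp (-(z/2) * Complex.I)) / 2 := rfl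
  have key := aux_key z
  have hsq := aux_sq z
  rw [Complex.cot_eq_cos_div_sin, hs, hc, hsq]
  rw [hsq] at hE
  generalize hEe : Complex.exp (z/2 * Complex.I) = E at *
  generalize hFe : Complex.exp (-(z/2) * Complex.I) = F at *
  have hE0 : E ≠ 0 := fun h => by simp [h] at key
  have hden : E ^ 2 - 1 ≠ 0 := sub_ne_zero.mpr hE
  have hsin : (F - E) * Complex.I / 2 ≠ 0 := by
    intro h
    apply hden
    have h' : F - E = 0 := by
      rcases mul_eq_zero.mp (show (F - E) * Complex.I = 0 by linear_combination 2*h) with h' | h'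
      · exact h'
      · exact absurd h' Complex.I_ne_zero
    have hFE : F = E := by linear_combination h'
    rw [hFE] at key
    linear_combination key
  rw [div_eq_div_iff hsin hden]
  linear_combination E * key + (-(E^2+1)*(F-E)/2) * Complex.I_sq

lemma aux_sin_sq_half (z : ℂ) :
    4 * Complex.sin (z / 2) ^ 2 * Complex.exp (Complex.I * z)
      = -(Complex.exp (Complex.I * z) - 1) ^ 2 := by
  have hs : Complex.sin (z/2)
      = (Complex.exp (-(z/2) * Complex.I) - Complex.exp (z/2 * Complex.I)) * Complex.I / 2 := rfl
  have key := aux_key z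
  have hsq := aux_sq z
  rw [hs, hsq]
  generalize hEe : Complex.exp (z/2 * Complex.I) = E at *
  generalize hFe : Complex.exp (-(z/2) * Complex.I) = F at *
  linear_combination (-(E*F - 2*E^2 + 1)) * key + ((F-E)^2*E^2) * Complex.I_sq

lemma aux_sin_ne (z : ℂ) (hE : Complex.exp (Complex.I * z) ≠ 1) :
    Complex.sin (z / 2) ≠ 0 := by
  intro h
  have := aux_sin_sq_half z
  rw [h] at this
  have h2 : Complex.exp (Complex.I * z) - 1 = 0 :=
    sq_eq_zero_iff.mp (by linear_combination this)
  exact hE (by linear_combination h2)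


/-- `D = ℂ ∖ 2πℤ`. -/
def Dtrig : Set ℂ := {z | ∀ m : ℤ, z ≠ 2 * (Real.pi : ℂ) * (m : ℂ)}

/-- The scalar trigonometric degeneration of the Kronecker function:
`φ₀(z,μ) = (1/2)(cot(z/2) + cot(μ/2))`. -/
def phi0 (z μ : ℂ) : ℂ := (1 / 2 : ℂ) * (Complex.cot (z / 2) + Complex.cot (μ / 2))

lemma aux_phi0 (z μ : ℂ) (hz : Complex.exp (Complex.I * z) ≠ 1)
    (hμ : Complex.exp (Complex.I * μ) ≠ 1) :
    phi0 z μ = Complex.I * (Complex.exp (Complex.I * z) * Complex.exp (Complex.I * μ) - 1)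
      / ((Complex.exp (Complex.I * z) - 1) * (Complex.exp (Complex.I * μ) - 1)) := by
  rw [phi0, aux_cot_half z hz, aux_cot_half μ hμ]
  generalize Complex.exp (Complex.I * z) = A at *
  generalize Complex.exp (Complex.I * μ) = C at *
  have hA1 : A - 1 ≠ 0 := sub_ne_zero.mpr hz
  have hC1 : C - 1 ≠ 0 := sub_ne_zero.mpr hμ
  field_simp
  ring

lemma aux_phi0_sub (z μ μ' : ℂ) (hz : Complex.exp (Complex.I * z) ≠ 1)
    (h : Complex.exp (Complex.I * (μ - μ')) ≠ 1) :
    phi0 z (μ - μ') = Complex.I *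
      (Complex.exp (Complex.I * z) * Complex.exp (Complex.I * μ) - Complex.exp (Complex.I * μ'))
      / ((Complex.exp (Complex.I * z) - 1) * (Complex.exp (Complex.I * μ) - Complex.exp (Complex.I * μ'))) := by
  rw [aux_phi0 z (μ - μ') hz h]
  rw [mul_sub Complex.I μ μ', Complex.exp_sub] at *
  have hC0 := Complex.exp_ne_zero (Complex.I * μ)
  have hD0 := Complex.exp_ne_zero (Complex.I * μ')
  generalize Complex.exp (Complex.I * z) = A at *
  generalize Complex.exp (Complex.I * μ) = C at *
  generalize Complex.exp (Complex.I * μ') = D at *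
  have hA1 : A - 1 ≠ 0 := sub_ne_zero.mpr hz
  have hCD1 : C - D ≠ 0 := fun hh => h (by rw [sub_eq_zero.mp hh, div_self hD0])
  have hCDd : C / D - 1 ≠ 0 := sub_ne_zero.mpr h
  field_simp

lemma aux_inv_sin (z : ℂ) (hz : Complex.exp (Complex.I * z) ≠ 1) :
    1 / (4 * Complex.sin (z / 2) ^ 2)
      = -Complex.exp (Complex.I * z) / (Complex.exp (Complex.I * z) - 1) ^ 2 := by
  have h4 := aux_sin_sq_half z
  have hs := aux_sin_ne z hz
  have h1 : 4 * Complex.sin (z / 2) ^ 2 ≠ 0 := mul_ne_zero (by norm_num) (pow_ne_zero 2 hs)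
  have h2 : (Complex.exp (Complex.I * z) - 1) ^ 2 ≠ 0 := pow_ne_zero 2 (sub_ne_zero.mpr hz)
  rw [div_eq_div_iff h1 h2]
  linear_combination h4

lemma aux_cot_neg (z : ℂ) : Complex.cot (-z / 2) = -Complex.cot (z / 2) := by
  rw [Complex.cot_eq_cos_div_sin, Complex.cot_eq_cos_div_sin, neg_div, Complex.sin_neg,
    Complex.cos_neg, div_neg]

lemma aux_phi0_neg (z μ : ℂ) (hz : Complex.exp (Complex.I * z) ≠ 1)
    (hμ : Complex.exp (Complex.I * μ) ≠ 1) :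
    phi0 (-z) μ = Complex.I * (Complex.exp (Complex.I * z) - Complex.exp (Complex.I * μ))
      / ((Complex.exp (Complex.I * z) - 1) * (Complex.exp (Complex.I * μ) - 1)) := by
  rw [phi0, aux_cot_neg, aux_cot_half z hz, aux_cot_half μ hμ]
  generalize Complex.exp (Complex.I * z) = A at *
  generalize Complex.exp (Complex.I * μ) = C at *
  have hA1 : A - 1 ≠ 0 := sub_ne_zero.mpr hz
  have hC1 : C - 1 ≠ 0 := sub_ne_zero.mpr hμ
  field_simp
  ring


/-- `φ₀` is a scalar trigonometric solution of the associative
Yang–Baxter equation: it is (a) skew-symmetric, (b) satisfies the AYBE, and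
(c) satisfies unitarity `φ₀(z,μ) φ₀(−z,μ) = 1/(4 sin²(μ/2)) − 1/(4 sin²(z/2))`. -/
theorem phi0_properties :
    (∀ z ∈ Dtrig, ∀ μ ∈ Dtrig, phi0 (-z) (-μ) = -phi0 z μ) ∧
    (∀ z z' μ μ' : ℂ, z ∈ Dtrig → z' ∈ Dtrig → z + z' ∈ Dtrig →
      μ ∈ Dtrig → μ' ∈ Dtrig → μ - μ' ∈ Dtrig → μ' - μ ∈ Dtrig →
      phi0 z μ * phi0 z' μ' =
        phi0 (z + z') μ' * phi0 z (μ - μ') + phi0 z' (μ' - μ) * phi0 (z + z') μ) ∧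
    (∀ z ∈ Dtrig, ∀ μ ∈ Dtrig,
      phi0 z μ * phi0 (-z) μ =
        1 / (4 * Complex.sin (μ / 2) ^ 2) - 1 / (4 * Complex.sin (z / 2) ^ 2)) := by
  refine ⟨?_, ?_, ?_⟩
  · intro z _ μ _
    rw [phi0, phi0, aux_cot_neg, aux_cot_neg]
    ring
  · intro z z' μ μ' h1 h2 h3 h4 h5 h6 h7
    have hA := aux_exp_ne_one z h1
    have hB := aux_exp_ne_one z' h2
    have hAB := aux_exp_ne_one (z + z') h3
    have hC := aux_exp_ne_one μ h4
    have hD := aux_exp_ne_one μ' h5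
    have hCD := aux_exp_ne_one (μ - μ') h6
    have hDC := aux_exp_ne_one (μ' - μ) h7
    rw [aux_phi0 z μ hA hC, aux_phi0 z' μ' hB hD, aux_phi0 (z+z') μ' hAB hD,
      aux_phi0_sub z μ μ' hA hCD, aux_phi0_sub z' μ' μ hB hDC, aux_phi0 (z+z') μ hAB hC]
    rw [mul_add Complex.I z z', Complex.exp_add] at *
    have hC0 := Complex.exp_ne_zero (Complex.I * μ)
    have hD0 := Complex.exp_ne_zero (Complex.I * μ')
    rw [mul_sub Complex.I μ μ', Complex.exp_sub] at hCD
    rw [mul_sub Complex.I μ' μ, Complex.exp_sub] at hDC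
    generalize Complex.exp (Complex.I * z) = A at *
    generalize Complex.exp (Complex.I * z') = B at *
    generalize Complex.exp (Complex.I * μ) = C at *
    generalize Complex.exp (Complex.I * μ') = D at *
    have hA1 : A - 1 ≠ 0 := sub_ne_zero.mpr hA
    have hB1 : B - 1 ≠ 0 := sub_ne_zero.mpr hB
    have hC1 : C - 1 ≠ 0 := sub_ne_zero.mpr hC
    have hD1 : D - 1 ≠ 0 := sub_ne_zero.mpr hD
    have hAB1 : A * B - 1 ≠ 0 := sub_ne_zero.mpr hAB
    have hCD1 : C - D ≠ 0 := fun h => hCD (by rw [sub_eq_zero.mp h, div_self hD0])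
    have hDC1 : D - C ≠ 0 := fun h => hDC (by rw [sub_eq_zero.mp h, div_self hC0])
    field_simp
    ring
  · intro z hz μ hμ
    have hA := aux_exp_ne_one z hz
    have hC := aux_exp_ne_one μ hμ
    rw [aux_phi0 z μ hA hC, aux_phi0_neg z μ hA hC, aux_inv_sin z hA, aux_inv_sin μ hC]
    generalize Complex.exp (Complex.I * z) = A at *
    generalize Complex.exp (Complex.I * μ) = C at *
    have hA1 : A - 1 ≠ 0 := sub_ne_zero.mpr hA
    have hC1 : C - 1 ≠ 0 := sub_ne_zero.mpr hC
    rw [div_mul_div_comm]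
    have hI : Complex.I * (A * C - 1) * (Complex.I * (A - C)) = -((A * C - 1) * (A - C)) := by
      linear_combination ((A * C - 1) * (A - C)) * Complex.I_sq
    rw [hI]
    field_simp
    ring

end
end
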